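/- Well-typed Linear A expressions are additive in their linear inputs: for any well-typed Linear A expression e, any well-typed valuation x_i of its free non-linear variables, and any two well-typed valuations ẋ_j and ẏ_j of its free linear variables, e[x_i; ẋ_j + ẏ_j]_l = e[x_i; ẋ_j]_l + e[x_i; ẏ_j]_l for each linear result position l of e, where + on values acts pointwise on the constituent real scalars. -/

import Mathlib

/-!
A deep embedding of Linear A / Linear B from
"You Only Linearize Once: Tangents Transpose to Gradients".

* n-ary tuple types are modeled as nested binary pairs;
* variables and function names are natural numbers;
* the linear type system `HasTy` demands every non-linear variable be used
  at least once and every linear variable exactly once (up to `dup`/`drop`);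
* `Eval P ρ dρ e os ls w` is call-by-value big-step evaluation over exact
  real arithmetic, returning the non-linear results `os`, the linear results
  `ls`, and the work `w` under the paper's cost model;
* `Transp` is the transposition transformation 𝒯 (Fig. 3),
  `Unzip` is the unzipping transformation 𝒰 (Fig. 4), and
  `Jvp` is forward-mode differentiation 𝒥 (Fig. 5).
-/

namespace LinearA

abbrev Var := ℕ

/-- Types of Linear A: real scalars and (binary, nestable) tuples. -/
inductive Ty : Type
  | real : Ty
  | pair : Ty → Ty → Ty
deriving DecidableEq

/-- The number of real scalars in a type. -/
def Ty.scalars : Ty → ℕ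
  | .real => 1
  | .pair a b => a.scalars + b.scalars

inductive Prim1 : Type | sin | cos | exp
deriving DecidableEq

inductive Prim2 : Type | add | mul
deriving DecidableEq

/-- Expressions of Linear A.  Binders carry their types.  In `ret`, `lete`,
`app` the first list is the non-linear one and the second the linear one. -/
inductive Expr : Type
  | ret (vs : List Var) (dvs : List Var)                                -- multi-value return (vs; dvs)
  | lete (bs : List (Var × Ty)) (dbs : List (Var × Ty)) (e₁ e₂ : Expr)  -- multi-value let
  | unpack (b₁ b₂ : Var × Ty) (v : Var) (e : Expr)                      -- non-linear tuple unpacking let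
  | linUnpack (b₁ b₂ : Var × Ty) (dv : Var) (e : Expr)                  -- linear tuple unpacking let
  | app (f : ℕ) (vs : List Var) (dvs : List Var)                        -- function application
  | var (v : Var)                                                       -- non-linear variable
  | lit (r : ℝ)                                                         -- real literal
  | tup (v₁ v₂ : Var)                                                   -- non-linear tuple constructor
  | prim1 (op : Prim1) (v : Var)                                        -- unary non-linear primitive
  | prim2 (op : Prim2) (v₁ v₂ : Var)                                    -- binary non-linear primitive
  | linVar (dv : Var)                                                   -- linear variable
  | linZero (τ : Ty)                                                    -- linear zero
  | linTup (dv₁ dv₂ : Var)                                              -- linear tuple constructor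
  | linAdd (dv₁ dv₂ : Var)                                              -- linear addition
  | scale (v : Var) (dv : Var)                                          -- right-linear multiplication v * dv
  | dup (dv : Var)                                                      -- explicit linear fan-out
  | drop (e : Expr)                                                     -- explicit drop

/-- A (top-level, non-recursive) function definition. -/
structure FDef : Type where
  params : List (Var × Ty)        -- non-linear formal parameters
  linParams : List (Var × Ty)     -- linear formal parameters
  retTys : List Ty                -- non-linear result types
  linRetTys : List Ty             -- linear result types
  body : Expr

/-- A program is a list of function definitions; names are list indices. -/
abbrev Program := List FDef

/-- Size of an expression: one unit per grammar node, counting variable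
references. -/
def Expr.size : Expr → ℕ
  | .ret vs dvs => 1 + vs.length + dvs.length
  | .lete bs dbs e₁ e₂ => 1 + bs.length + dbs.length + e₁.size + e₂.size
  | .unpack _ _ _ e => 4 + e.size
  | .linUnpack _ _ _ e => 4 + e.size
  | .app _ vs dvs => 1 + vs.length + dvs.length
  | .var _ => 1
  | .lit _ => 1
  | .tup _ _ => 3
  | .prim1 _ _ => 2
  | .prim2 _ _ _ => 3
  | .linVar _ => 1
  | .linZero _ => 1
  | .linTup _ _ => 3
  | .linAdd _ _ => 3
  | .scale _ _ => 3
  | .dup _ => 2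
  | .drop e => 1 + e.size

def FDef.size (d : FDef) : ℕ :=
  1 + d.params.length + d.linParams.length + d.retTys.length + d.linRetTys.length + d.body.size

/-- Size of a program. -/
def progSize (P : Program) : ℕ := (P.map FDef.size).sum

/-- Typing environments: finite sets of typed variables. -/
abbrev TEnv := Finset (Var × Ty)

/-- The linear type system of Linear A (Fig. 2):
`HasTy P Γ Δ e τs σs` means that in non-linear environment `Γ` and linear
environment `Δ`, the expression `e` returns non-linear results typed `τs`
and linear results typed `σs`.  Every non-linear variable must be used at
least once (unions of the `Γᵢ` need not be disjoint but leaves consume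
exactly their own environment) and every linear variable exactly once
(unions of the `Δᵢ` are disjoint). -/
inductive HasTy : Program → TEnv → TEnv → Expr → List Ty → List Ty → Prop
  | ret {P : Program} (vs dvs : List (Var × Ty)) :
      (vs.map Prod.fst).Nodup → (dvs.map Prod.fst).Nodup →
      HasTy P vs.toFinset dvs.toFinset
        (.ret (vs.map Prod.fst) (dvs.map Prod.fst)) (vs.map Prod.snd) (dvs.map Prod.snd)
  | lete {P : Program} {Γ₁ Γ₂ Δ₁ Δ₂ : TEnv} {bs dbs : List (Var × Ty)}
      {e₁ e₂ : Expr} {τs σs : List Ty} :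
      HasTy P Γ₁ Δ₁ e₁ (bs.map Prod.snd) (dbs.map Prod.snd) →
      HasTy P (Γ₂ ∪ bs.toFinset) (Δ₂ ∪ dbs.toFinset) e₂ τs σs →
      Disjoint Δ₁ Δ₂ → Disjoint Δ₂ dbs.toFinset →
      (dbs.map Prod.fst).Nodup →
      HasTy P (Γ₁ ∪ Γ₂) (Δ₁ ∪ Δ₂) (.lete bs dbs e₁ e₂) τs σs
  | unpack {P : Program} {Γ Δ : TEnv} {e : Expr} {τs σs : List Ty}
      (v : Var) (b₁ b₂ : Var × Ty) :
      HasTy P (Γ ∪ {b₁, b₂}) Δ e τs σs →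
      HasTy P (Γ ∪ {(v, .pair b₁.2 b₂.2)}) Δ (.unpack b₁ b₂ v e) τs σs
  | linUnpack {P : Program} {Γ Δ : TEnv} {e : Expr} {τs σs : List Ty}
      (dv : Var) (b₁ b₂ : Var × Ty) :
      HasTy P Γ (Δ ∪ {b₁, b₂}) e τs σs →
      Disjoint Δ ({b₁, b₂} : TEnv) → b₁.1 ≠ b₂.1 →
      HasTy P Γ (Δ ∪ {(dv, .pair b₁.2 b₂.2)}) (.linUnpack b₁ b₂ dv e) τs σs
  | app {P : Program} (f : ℕ) (d : FDef) (vs dvs : List Var) :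
      P[f]? = some d →
      vs.length = d.params.length → dvs.length = d.linParams.length →
      dvs.Nodup →
      HasTy P (vs.zip (d.params.map Prod.snd)).toFinset
              (dvs.zip (d.linParams.map Prod.snd)).toFinset
              (.app f vs dvs) d.retTys d.linRetTys
  | var {P : Program} (v : Var) (τ : Ty) : HasTy P {(v, τ)} ∅ (.var v) [τ] []
  | lit {P : Program} (r : ℝ) : HasTy P ∅ ∅ (.lit r) [.real] []
  | tup {P : Program} (v₁ v₂ : Var) (τ₁ τ₂ : Ty) :
      HasTy P {(v₁, τ₁), (v₂, τ₂)} ∅ (.tup v₁ v₂) [.pair τ₁ τ₂] []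
  | prim1 {P : Program} (op : Prim1) (v : Var) :
      HasTy P {(v, .real)} ∅ (.prim1 op v) [.real] []
  | prim2 {P : Program} (op : Prim2) (v₁ v₂ : Var) :
      HasTy P {(v₁, .real), (v₂, .real)} ∅ (.prim2 op v₁ v₂) [.real] []
  | linVar {P : Program} (dv : Var) (τ : Ty) : HasTy P ∅ {(dv, τ)} (.linVar dv) [] [τ]
  | linZero {P : Program} (τ : Ty) : HasTy P ∅ ∅ (.linZero τ) [] [τ]
  | linTup {P : Program} (dv₁ dv₂ : Var) (τ₁ τ₂ : Ty) :
      dv₁ ≠ dv₂ →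
      HasTy P ∅ {(dv₁, τ₁), (dv₂, τ₂)} (.linTup dv₁ dv₂) [] [.pair τ₁ τ₂]
  | linAdd {P : Program} (dv₁ dv₂ : Var) (τ : Ty) :
      dv₁ ≠ dv₂ →
      HasTy P ∅ {(dv₁, τ), (dv₂, τ)} (.linAdd dv₁ dv₂) [] [τ]
  | scale {P : Program} (v dv : Var) (τ : Ty) :
      HasTy P {(v, .real)} {(dv, τ)} (.scale v dv) [] [τ]
  | dup {P : Program} (dv : Var) (τ : Ty) :
      HasTy P ∅ {(dv, τ)} (.dup dv) [] [τ, τ]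
  | drop {P : Program} {Γ Δ : TEnv} {e : Expr} {τs σs : List Ty} :
      HasTy P Γ Δ e τs σs → HasTy P Γ Δ (.drop e) [] []

/-- A program is well typed when the body of each definition is well typed
using only earlier definitions (so there is no recursion). -/
def ProgramWT (P : Program) : Prop :=
  ∀ (i : ℕ) (d : FDef), P[i]? = some d →
    HasTy (P.take i) d.params.toFinset d.linParams.toFinset d.body d.retTys d.linRetTys

/-! ### Values and evaluation -/

inductive Val : Type
  | real (r : ℝ)
  | pair (a b : Val)

def Val.scalars : Val → ℕ
  | .real _ => 1
  | .pair a b => a.scalars + b.scalars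

/-- The zero value of a type. -/
def zeroVal : Ty → Val
  | .real => .real 0
  | .pair a b => .pair (zeroVal a) (zeroVal b)

/-- Pointwise addition of values (of a common type). -/
def addVal : Val → Val → Val
  | .real a, .real b => .real (a + b)
  | .pair a₁ a₂, .pair b₁ b₂ => .pair (addVal a₁ b₁) (addVal a₂ b₂)
  | v, _ => v

/-- Pointwise scaling of a value by a real scalar. -/
def smulVal (c : ℝ) : Val → Val
  | .real r => .real (c * r)
  | .pair a b => .pair (smulVal c a) (smulVal c b)

/-- Dot product of two values (of a common type), over all constituent
real scalars. -/
def dotVal : Val → Val → ℝ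
  | .real a, .real b => a * b
  | .pair a₁ a₂, .pair b₁ b₂ => dotVal a₁ b₁ + dotVal a₂ b₂
  | _, _ => 0

/-- Flattening a value to its list of real scalars. -/
def Val.flat : Val → List ℝ
  | .real r => [r]
  | .pair a b => a.flat ++ b.flat

/-- The list of real scalars of a list of values. -/
def flatList (vs : List Val) : List ℝ := (vs.map Val.flat).flatten

inductive ValHasTy : Val → Ty → Prop
  | real (r : ℝ) : ValHasTy (.real r) .real
  | pair {a b : Val} {τ₁ τ₂ : Ty} :
      ValHasTy a τ₁ → ValHasTy b τ₂ → ValHasTy (.pair a b) (.pair τ₁ τ₂)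

/-- Value environments (valuations). -/
abbrev VEnv := Var → Val

/-- A valuation is well typed for an environment when it assigns each
variable a value of its declared type. -/
def EnvTyped (ρ : VEnv) (Γ : TEnv) : Prop := ∀ p ∈ Γ, ValHasTy (ρ p.1) p.2

/-- Bind a list of variables to a list of values. -/
def updEnv (ρ : VEnv) (xs : List Var) (vs : List Val) : VEnv :=
  (xs.zip vs).foldl (fun ρ p => Function.update ρ p.1 p.2) ρ

noncomputable def evalPrim1 : Prim1 → ℝ → ℝ
  | .sin => Real.sin
  | .cos => Real.cos
  | .exp => Real.exp

def evalPrim2 : Prim2 → ℝ → ℝ → ℝ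
  | .add => (· + ·)
  | .mul => (· * ·)

/-- Call-by-value big-step evaluation with cost:
`Eval P ρ dρ e os ls w` means that under the non-linear valuation `ρ` and
linear valuation `dρ`, `e` evaluates to non-linear results `os` and linear
results `ls`, performing total work `w` (the paper's cost model: non-linear
primitives cost 1; linear addition and scaling cost 1 per real scalar in the
result; `drop` additionally costs 1 per real scalar dropped; everything else
is free). -/
inductive Eval : Program → VEnv → VEnv → Expr → List Val → List Val → ℕ → Prop
  | ret {P ρ dρ} (vs dvs : List Var) :
      Eval P ρ dρ (.ret vs dvs) (vs.map ρ) (dvs.map dρ) 0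
  | lete {P ρ dρ bs dbs e₁ e₂ us dus os ls w₁ w₂} :
      Eval P ρ dρ e₁ us dus w₁ →
      Eval P (updEnv ρ (bs.map Prod.fst) us) (updEnv dρ (dbs.map Prod.fst) dus) e₂ os ls w₂ →
      Eval P ρ dρ (.lete bs dbs e₁ e₂) os ls (w₁ + w₂)
  | unpack {P ρ dρ b₁ b₂ v e a b os ls w} :
      ρ v = .pair a b →
      Eval P (updEnv ρ [b₁.1, b₂.1] [a, b]) dρ e os ls w →
      Eval P ρ dρ (.unpack b₁ b₂ v e) os ls w
  | linUnpack {P ρ dρ b₁ b₂ dv e a b os ls w} :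
      dρ dv = .pair a b →
      Eval P ρ (updEnv dρ [b₁.1, b₂.1] [a, b]) e os ls w →
      Eval P ρ dρ (.linUnpack b₁ b₂ dv e) os ls w
  | app {P ρ dρ f d vs dvs os ls w} :
      P[f]? = some d →
      Eval P (updEnv (fun _ => Val.real 0) (d.params.map Prod.fst) (vs.map ρ))
             (updEnv (fun _ => Val.real 0) (d.linParams.map Prod.fst) (dvs.map dρ))
             d.body os ls w →
      Eval P ρ dρ (.app f vs dvs) os ls w
  | var {P ρ dρ} (v : Var) : Eval P ρ dρ (.var v) [ρ v] [] 0
  | lit {P ρ dρ} (r : ℝ) : Eval P ρ dρ (.lit r) [.real r] [] 0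
  | tup {P ρ dρ} (v₁ v₂ : Var) : Eval P ρ dρ (.tup v₁ v₂) [.pair (ρ v₁) (ρ v₂)] [] 0
  | prim1 {P ρ dρ op v r} :
      ρ v = .real r →
      Eval P ρ dρ (.prim1 op v) [.real (evalPrim1 op r)] [] 1
  | prim2 {P ρ dρ op v₁ v₂ r₁ r₂} :
      ρ v₁ = .real r₁ → ρ v₂ = .real r₂ →
      Eval P ρ dρ (.prim2 op v₁ v₂) [.real (evalPrim2 op r₁ r₂)] [] 1
  | linVar {P ρ dρ} (dv : Var) : Eval P ρ dρ (.linVar dv) [] [dρ dv] 0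
  | linZero {P ρ dρ} (τ : Ty) : Eval P ρ dρ (.linZero τ) [] [zeroVal τ] 0
  | linTup {P ρ dρ} (d₁ d₂ : Var) :
      Eval P ρ dρ (.linTup d₁ d₂) [] [.pair (dρ d₁) (dρ d₂)] 0
  | linAdd {P ρ dρ} (d₁ d₂ : Var) :
      Eval P ρ dρ (.linAdd d₁ d₂) [] [addVal (dρ d₁) (dρ d₂)]
        (addVal (dρ d₁) (dρ d₂)).scalars
  | scale {P ρ dρ dv c} (v : Var) :
      ρ v = .real c →
      Eval P ρ dρ (.scale v dv) [] [smulVal c (dρ dv)] (smulVal c (dρ dv)).scalars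
  | dup {P ρ dρ} (dv : Var) : Eval P ρ dρ (.dup dv) [] [dρ dv, dρ dv] 0
  | drop {P ρ dρ e os ls w} :
      Eval P ρ dρ e os ls w →
      Eval P ρ dρ (.drop e) [] []
        (w + (os.map Val.scalars).sum + (ls.map Val.scalars).sum)

/-! ### The purely non-linear fragment and Linear B -/

/-- The purely non-linear fragment of Linear A: expressions that mention no
linear variables and return no linear results. -/
inductive PureNonLin : Expr → Prop
  | ret (vs : List Var) : PureNonLin (.ret vs [])
  | lete {e₁ e₂ : Expr} (bs : List (Var × Ty)) :
      PureNonLin e₁ → PureNonLin e₂ → PureNonLin (.lete bs [] e₁ e₂)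
  | unpack {e : Expr} (b₁ b₂ : Var × Ty) (v : Var) :
      PureNonLin e → PureNonLin (.unpack b₁ b₂ v e)
  | app (f : ℕ) (vs : List Var) : PureNonLin (.app f vs [])
  | var (v : Var) : PureNonLin (.var v)
  | lit (r : ℝ) : PureNonLin (.lit r)
  | tup (v₁ v₂ : Var) : PureNonLin (.tup v₁ v₂)
  | prim1 (op : Prim1) (v : Var) : PureNonLin (.prim1 op v)
  | prim2 (op : Prim2) (v₁ v₂ : Var) : PureNonLin (.prim2 op v₁ v₂)
  | drop {e : Expr} : PureNonLin e → PureNonLin (.drop e)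

/-- Linear expressions of Linear B: they return only linear results, and any
non-linear sub-expression is purely non-linear (in particular reads no linear
variables, not even to drop them). -/
inductive LinBExpr : Expr → Prop
  | ret (dvs : List Var) : LinBExpr (.ret [] dvs)
  | letLin {le₁ le₂ : Expr} (dbs : List (Var × Ty)) :
      LinBExpr le₁ → LinBExpr le₂ → LinBExpr (.lete [] dbs le₁ le₂)
  | letNonLin {e₁ le₂ : Expr} (bs : List (Var × Ty)) :
      PureNonLin e₁ → LinBExpr le₂ → LinBExpr (.lete bs [] e₁ le₂)
  | unpack {le : Expr} (b₁ b₂ : Var × Ty) (v : Var) :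
      LinBExpr le → LinBExpr (.unpack b₁ b₂ v le)
  | linUnpack {le : Expr} (b₁ b₂ : Var × Ty) (dv : Var) :
      LinBExpr le → LinBExpr (.linUnpack b₁ b₂ dv le)
  | app (f : ℕ) (vs dvs : List Var) : LinBExpr (.app f vs dvs)
  | linVar (dv : Var) : LinBExpr (.linVar dv)
  | linZero (τ : Ty) : LinBExpr (.linZero τ)
  | linTup (d₁ d₂ : Var) : LinBExpr (.linTup d₁ d₂)
  | linAdd (d₁ d₂ : Var) : LinBExpr (.linAdd d₁ d₂)
  | scale (v dv : Var) : LinBExpr (.scale v dv)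
  | dup (dv : Var) : LinBExpr (.dup dv)
  | drop {le : Expr} : LinBExpr le → LinBExpr (.drop le)

/-- A purely non-linear function definition. -/
def FDefNonLin (d : FDef) : Prop :=
  d.linParams = [] ∧ d.linRetTys = [] ∧ PureNonLin d.body

/-- A linear function definition of Linear B. -/
def FDefLin (d : FDef) : Prop := d.retTys = [] ∧ LinBExpr d.body

/-- A Linear B program: every definition returns either only linear or only
non-linear results. -/
def LinearBProg (P : Program) : Prop := ∀ d ∈ P, FDefNonLin d ∨ FDefLin d

/-! ### Transposition (Fig. 3) -/

/-- The expression emitting a zero cotangent for each variable of `Δ`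
(used to transpose `drop`). -/
def zerosFor (Δ : List (Var × Ty)) : Expr :=
  Δ.foldr (fun b acc => .lete [] [b] (.linZero b.2) acc) (.ret [] (Δ.map Prod.fst))

/-- Transposition of the linear expressions of Linear B:
`Transp Δ Δc le te` means that with ordered linear environment `Δ` (listing
`le`'s free linear variables, in the order of `te`'s results) and ordered
cotangent environment `Δc` (naming one fresh cotangent variable per linear
result of `le`, with the same types), `le` transposes to `te`.  Non-linear
sub-expressions are left untouched; the `perm` rule implements the implicit
shuffles that re-order an environment together with the corresponding
results. -/
inductive Transp : List (Var × Ty) → List (Var × Ty) → Expr → Expr → Prop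
  | ret (dvs ddvs : List (Var × Ty)) :
      dvs.map Prod.snd = ddvs.map Prod.snd →
      (dvs.map Prod.fst).Nodup → (ddvs.map Prod.fst).Nodup →
      Transp dvs ddvs (.ret [] (dvs.map Prod.fst)) (.ret [] (ddvs.map Prod.fst))
  | letLin {le₁ le₂ te₁ te₂ : Expr} (Δ₁ Δ₂ Δc dbs ddbs ddws rs : List (Var × Ty)) :
      Transp (dbs ++ Δ₂) Δc le₂ te₂ →
      Transp Δ₁ ddbs le₁ te₁ →
      ddbs.map Prod.snd = dbs.map Prod.snd →
      ddws.map Prod.snd = Δ₂.map Prod.snd →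
      rs.map Prod.snd = Δ₁.map Prod.snd →
      ((ddbs ++ ddws ++ rs).map Prod.fst).Nodup →
      Transp (Δ₁ ++ Δ₂) Δc (.lete [] dbs le₁ le₂)
        (.lete [] (ddbs ++ ddws) te₂
          (.lete [] rs te₁ (.ret [] (rs.map Prod.fst ++ ddws.map Prod.fst))))
  | letNonLin {e₁ le₂ te₂ : Expr} (Δ Δc bs : List (Var × Ty)) :
      PureNonLin e₁ → bs ≠ [] →
      Transp Δ Δc le₂ te₂ →
      Transp Δ Δc (.lete bs [] e₁ le₂) (.lete bs [] e₁ te₂)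
  | unpack {le te : Expr} (Δ Δc : List (Var × Ty)) (b₁ b₂ : Var × Ty) (v : Var) :
      Transp Δ Δc le te →
      Transp Δ Δc (.unpack b₁ b₂ v le) (.unpack b₁ b₂ v te)
  | linUnpack {le te : Expr} (Δ₂ Δc ws : List (Var × Ty)) (b₁ b₂ : Var × Ty)
      (dv c₁ c₂ ddv : Var) :
      Transp (b₁ :: b₂ :: Δ₂) Δc le te →
      ws.map Prod.snd = Δ₂.map Prod.snd →
      (((c₁, b₁.2) :: (c₂, b₂.2) :: ws).map Prod.fst).Nodup →
      Transp ((dv, .pair b₁.2 b₂.2) :: Δ₂) Δc (.linUnpack b₁ b₂ dv le)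
        (.lete [] ((c₁, b₁.2) :: (c₂, b₂.2) :: ws) te
          (.lete [] [(ddv, .pair b₁.2 b₂.2)] (.linTup c₁ c₂)
            (.ret [] (ddv :: ws.map Prod.fst))))
  | app (f : ℕ) (vs : List Var) (Δ Δc : List (Var × Ty)) :
      Transp Δ Δc (.app f vs (Δ.map Prod.fst)) (.app f vs (Δc.map Prod.fst))
  | nonlin {e : Expr} : PureNonLin e → Transp [] [] e e
  | linVar (dv ddv : Var) (τ : Ty) :
      Transp [(dv, τ)] [(ddv, τ)] (.linVar dv) (.linVar ddv)
  | linZero (ddv : Var) (τ : Ty) :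
      Transp [] [(ddv, τ)] (.linZero τ) (.drop (.linVar ddv))
  | linTup (d₁ d₂ ddv c₁ c₂ : Var) (τ₁ τ₂ : Ty) :
      c₁ ≠ c₂ →
      Transp [(d₁, τ₁), (d₂, τ₂)] [(ddv, .pair τ₁ τ₂)] (.linTup d₁ d₂)
        (.linUnpack (c₁, τ₁) (c₂, τ₂) ddv (.ret [] [c₁, c₂]))
  | linAdd (d₁ d₂ ddv : Var) (τ : Ty) :
      Transp [(d₁, τ), (d₂, τ)] [(ddv, τ)] (.linAdd d₁ d₂) (.dup ddv)
  | scale (v dv ddv : Var) (τ : Ty) :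
      Transp [(dv, τ)] [(ddv, τ)] (.scale v dv) (.scale v ddv)
  | dup (dv dd₁ dd₂ : Var) (τ : Ty) :
      Transp [(dv, τ)] [(dd₁, τ), (dd₂, τ)] (.dup dv) (.linAdd dd₁ dd₂)
  | dropLin {le : Expr} (Δ : List (Var × Ty)) :
      LinBExpr le →
      Transp Δ [] (.drop le) (zerosFor Δ)
  | perm {le te : Expr} (Δ Δ' Δc rs rs' : List (Var × Ty)) :
      Transp Δ Δc le te →
      rs.map Prod.snd = Δ.map Prod.snd →
      (rs.zip Δ).Perm (rs'.zip Δ') →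
      (rs.map Prod.fst).Nodup →
      Transp Δ' Δc le (.lete [] rs te (.ret [] (rs'.map Prod.fst)))

/-- Transposition of a linear function definition: the transposed function
takes the same non-linear parameters, takes cotangents of the original linear
results, and returns cotangents of the original linear parameters. -/
def TranspDef (d d' : FDef) : Prop :=
  d.retTys = [] ∧
  ∃ ddvs : List (Var × Ty),
    ddvs.map Prod.snd = d.linRetTys ∧ (ddvs.map Prod.fst).Nodup ∧
    Transp d.linParams ddvs d.body d'.body ∧
    d'.params = d.params ∧ d'.linParams = ddvs ∧
    d'.retTys = [] ∧ d'.linRetTys = d.linParams.map Prod.snd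

/-- Transposition of a Linear B program: each linear definition is
transposed (in place, so call sites keep their function indices) and each
non-linear definition is kept as is. -/
def TranspProg (P P' : Program) : Prop :=
  List.Forall₂ (fun d d' => TranspDef d d' ∨ (FDefNonLin d ∧ d' = d)) P P'

/-! ### Unzipping (Fig. 4) -/

/-- A frame of a context `E` of non-linear bindings. -/
inductive Frame : Type
  | bindF (bs : List (Var × Ty)) (e : Expr)     -- let (bs;) = e in ⟨hole⟩
  | unpackF (b₁ b₂ : Var × Ty) (v : Var)        -- let ⊗(b₁,b₂) = v in ⟨hole⟩

/-- A context is a list of non-linear binding frames with a single hole at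
the end. -/
abbrev Ctx := List Frame

/-- Plugging an expression into the hole of a context. -/
def plug : Ctx → Expr → Expr
  | [], e => e
  | .bindF bs e₁ :: E, e => .lete bs [] e₁ (plug E e)
  | .unpackF b₁ b₂ v :: E, e => .unpack b₁ b₂ v (plug E e)

/-- The (typed) variables bound by a context. -/
def ctxBinds : Ctx → TEnv
  | [] => ∅
  | .bindF bs _ :: E => bs.toFinset ∪ ctxBinds E
  | .unpackF b₁ b₂ _ :: E => {b₁, b₂} ∪ ctxBinds E

/-- Frame sizes, so that unzipping is size-preserving at the program level. -/
def Frame.size : Frame → ℕ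
  | .bindF bs e => 1 + bs.length + e.size
  | .unpackF _ _ _ => 4

/-- The free non-linear variables of an expression. -/
def Expr.freeNLVars : Expr → Finset Var
  | .ret vs _ => vs.toFinset
  | .lete bs _ e₁ e₂ => e₁.freeNLVars ∪ (e₂.freeNLVars \ (bs.map Prod.fst).toFinset)
  | .unpack b₁ b₂ v e => {v} ∪ (e.freeNLVars \ {b₁.1, b₂.1})
  | .linUnpack _ _ _ e => e.freeNLVars
  | .app _ vs _ => vs.toFinset
  | .var v => {v}
  | .lit _ => ∅
  | .tup v₁ v₂ => {v₁, v₂}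
  | .prim1 _ v => {v}
  | .prim2 _ v₁ v₂ => {v₁, v₂}
  | .linVar _ => ∅
  | .linZero _ => ∅
  | .linTup _ _ => ∅
  | .linAdd _ _ => ∅
  | .scale v _ => {v}
  | .dup _ => ∅
  | .drop e => e.freeNLVars

/-- Non-linear leaves, handled by rule `ULeaf`. -/
def isNLLeaf : Expr → Prop
  | .var _ => True
  | .lit _ => True
  | .tup _ _ => True
  | .prim1 _ _ => True
  | .prim2 _ _ _ => True
  | _ => False

/-- Linear leaves, handled by rule `ULinLeaf`. -/
def isLinLeaf : Expr → Prop
  | .linVar _ => True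
  | .linZero _ => True
  | .linTup _ _ => True
  | .linAdd _ _ => True
  | .scale _ _ => True
  | .dup _ => True
  | _ => False

/-- Unzipping `𝒰` of Linear A expressions into Linear B (Fig. 4):
`Unzip sig e E e' le'` splits `e` into a context `E` of shared non-linear
bindings, a non-linear result expression `e'` and a linear residual
expression `le'`.  In the unzipped program the definition with index `f`
becomes the pair of definitions with indices `2f` (non-linear part, which
additionally returns the tape) and `2f+1` (linear part, which consumes the
tape); `sig f = some (τks, τms)` records the original non-linear result
types `τks` of `f` and the types `τms` of its tape. -/
inductive Unzip (sig : ℕ → Option (List Ty × List Ty)) :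
    Expr → Ctx → Expr → Expr → Prop
  | ret (vs dvs : List Var) :
      Unzip sig (.ret vs dvs) [] (.ret vs []) (.ret [] dvs)
  | lete {e₁ e₂ e₁' e₂' le₁' le₂' : Expr} {E₁ E₂ : Ctx}
      (bs dbs : List (Var × Ty)) :
      Unzip sig e₁ E₁ e₁' le₁' →
      Unzip sig e₂ E₂ e₂' le₂' →
      Unzip sig (.lete bs dbs e₁ e₂) (E₁ ++ .bindF bs e₁' :: E₂) e₂'
        (.lete [] dbs le₁' le₂')
  | unpack {e e' le' : Expr} {E : Ctx} (b₁ b₂ : Var × Ty) (v : Var) :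
      Unzip sig e E e' le' →
      Unzip sig (.unpack b₁ b₂ v e) (.unpackF b₁ b₂ v :: E) e' le'
  | linUnpack {e e' le' : Expr} {E : Ctx} (b₁ b₂ : Var × Ty) (dv : Var) :
      Unzip sig e E e' le' →
      Unzip sig (.linUnpack b₁ b₂ dv e) E e' (.linUnpack b₁ b₂ dv le')
  | app (f : ℕ) (vs dvs : List Var) (τks τms : List Ty) (ws xs : List (Var × Ty)) :
      sig f = some (τks, τms) →
      ws.map Prod.snd = τks → xs.map Prod.snd = τms →
      ((ws ++ xs).map Prod.fst).Nodup →
      Unzip sig (.app f vs dvs)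
        [.bindF (ws ++ xs) (.app (2 * f) vs [])]
        (.ret (ws.map Prod.fst) [])
        (.app (2 * f + 1) (xs.map Prod.fst) dvs)
  | nlLeaf {e : Expr} : isNLLeaf e → Unzip sig e [] e (.ret [] [])
  | linLeaf {le : Expr} : isLinLeaf le → Unzip sig le [] (.ret [] []) le
  | drop {e e' le' : Expr} {E : Ctx} :
      Unzip sig e E e' le' →
      Unzip sig (.drop e) E (.drop e') (.drop le')

/-- `IsTape Γ E le' xs`: the tape `xs` consists exactly of the non-linear
variables read by the residual `le'`, each bound (with its type) by `Γ` or by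
the context `E`. -/
def IsTape (Γ : TEnv) (E : Ctx) (le' : Expr) (xs : List (Var × Ty)) : Prop :=
  (xs.map Prod.fst).Nodup ∧
  (xs.map Prod.fst).toFinset = le'.freeNLVars ∧
  ∀ b ∈ xs, b ∈ Γ ∪ ctxBinds E

/-- The non-linear partial `E(e', xs)`: plug `let (ws;) = e' in (ws, xs;)`
into the hole of `E`, so that it returns the non-linear results of the
original expression together with the tape. -/
def nlPartial (E : Ctx) (e' : Expr) (ws xs : List (Var × Ty)) : Expr :=
  plug E (.lete ws [] e' (.ret (ws.map Prod.fst ++ xs.map Prod.fst) []))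

/-- The reconstruction `E(e', xs; le')`:
`let (ws, xs;) = E(e', xs) in let (; dws) = le' in (ws; dws)`. -/
def recon (E : Ctx) (e' le' : Expr) (ws xs dws : List (Var × Ty)) : Expr :=
  .lete (ws ++ xs) [] (nlPartial E e' ws xs)
    (.lete [] dws le' (.ret (ws.map Prod.fst) (dws.map Prod.fst)))

/-- Unzipping a function definition into its non-linear part `dN` (which
additionally returns the tape) and its linear part `dL` (which consumes the
tape). -/
def UnzipDef (sig : ℕ → Option (List Ty × List Ty)) (d dN dL : FDef) : Prop :=
  ∃ (E : Ctx) (e' le' : Expr) (xs ws : List (Var × Ty)),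
    Unzip sig d.body E e' le' ∧
    IsTape d.params.toFinset E le' xs ∧
    ws.map Prod.snd = d.retTys ∧ (ws.map Prod.fst).Nodup ∧
    dN = ⟨d.params, [], d.retTys ++ xs.map Prod.snd, [], nlPartial E e' ws xs⟩ ∧
    dL = ⟨xs, d.linParams, [], d.linRetTys, le'⟩

/-- Unzipping a program: definition `f` becomes the pair `2f` (non-linear
part) and `2f+1` (linear part), and `sig` records the signatures. -/
def UnzipProg (sig : ℕ → Option (List Ty × List Ty)) (P P' : Program) : Prop :=
  P'.length = 2 * P.length ∧
  ∀ (f : ℕ) (d : FDef), P[f]? = some d →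
    ∃ dN dL : FDef, P'[2 * f]? = some dN ∧ P'[2 * f + 1]? = some dL ∧
      UnzipDef sig d dN dL ∧
      sig f = some (d.retTys, dL.params.map Prod.snd)

/-! ### Forward-mode differentiation (Fig. 5) -/

/-- Forward-mode automatic differentiation `𝒥` (Fig. 5):
`Jvp m e e'` means that under the primal-to-tangent renaming `m` (an
association list pairing each occurrence of a free primal variable with the
linear variable carrying its tangent), the purely non-linear expression `e`
differentiates to `e'`, which returns the primal results together with their
tangents.  The rule `dupVar` inserts the explicit `dup`s for primal
variables whose tangent is used more than once, and `perm` permutes the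
association list. -/
inductive Jvp : List (Var × Var) → Expr → Expr → Prop
  | ret (vs dvs : List Var) :
      vs.length = dvs.length →
      Jvp (vs.zip dvs) (.ret vs []) (.ret vs dvs)
  | lete {e₁ e₂ e₁' e₂' : Expr} (m₁ m₂ : List (Var × Var)) (bs dbs : List (Var × Ty)) :
      Jvp m₁ e₁ e₁' →
      Jvp ((bs.map Prod.fst).zip (dbs.map Prod.fst) ++ m₂) e₂ e₂' →
      dbs.map Prod.snd = bs.map Prod.snd →
      Jvp (m₁ ++ m₂) (.lete bs [] e₁ e₂) (.lete bs dbs e₁' e₂')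
  | unpack {e e' : Expr} (b₁ b₂ : Var × Ty) (v dv c₁ c₂ : Var) (m : List (Var × Var)) :
      Jvp ((b₁.1, c₁) :: (b₂.1, c₂) :: m) e e' →
      Jvp ((v, dv) :: m) (.unpack b₁ b₂ v e)
        (.unpack b₁ b₂ v (.linUnpack (c₁, b₁.2) (c₂, b₂.2) dv e'))
  | app (f : ℕ) (vs dvs : List Var) :
      vs.length = dvs.length →
      Jvp (vs.zip dvs) (.app f vs []) (.app f vs dvs)
  | var (v dv : Var) : Jvp [(v, dv)] (.var v) (.ret [v] [dv])
  | lit (r : ℝ) (p z : Var) :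
      Jvp [] (.lit r)
        (.lete [(p, .real)] [] (.lit r)
          (.lete [] [(z, .real)] (.linZero .real) (.ret [p] [z])))
  | tup (v₁ v₂ d₁ d₂ p q : Var) (τ₁ τ₂ : Ty) :
      Jvp [(v₁, d₁), (v₂, d₂)] (.tup v₁ v₂)
        (.lete [(p, .pair τ₁ τ₂)] [] (.tup v₁ v₂)
          (.lete [] [(q, .pair τ₁ τ₂)] (.linTup d₁ d₂) (.ret [p] [q])))
  | primSin (v dv p c t : Var) :
      Jvp [(v, dv)] (.prim1 .sin v)
        (.lete [(p, .real)] [] (.prim1 .sin v)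
          (.lete [(c, .real)] [] (.prim1 .cos v)
            (.lete [] [(t, .real)] (.scale c dv) (.ret [p] [t]))))
  | primCos (v dv p s n ns t : Var) :
      Jvp [(v, dv)] (.prim1 .cos v)
        (.lete [(p, .real)] [] (.prim1 .cos v)
          (.lete [(s, .real)] [] (.prim1 .sin v)
            (.lete [(n, .real)] [] (.lit (-1))
              (.lete [(ns, .real)] [] (.prim2 .mul n s)
                (.lete [] [(t, .real)] (.scale ns dv) (.ret [p] [t]))))))
  | primExp (v dv p t : Var) :
      Jvp [(v, dv)] (.prim1 .exp v)
        (.lete [(p, .real)] [] (.prim1 .exp v)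
          (.lete [] [(t, .real)] (.scale p dv) (.ret [p] [t])))
  | primAdd (v₁ v₂ d₁ d₂ p t : Var) :
      Jvp [(v₁, d₁), (v₂, d₂)] (.prim2 .add v₁ v₂)
        (.lete [(p, .real)] [] (.prim2 .add v₁ v₂)
          (.lete [] [(t, .real)] (.linAdd d₁ d₂) (.ret [p] [t])))
  | primMul (v₁ v₂ d₁ d₂ p a b t : Var) :
      Jvp [(v₁, d₁), (v₂, d₂)] (.prim2 .mul v₁ v₂)
        (.lete [(p, .real)] [] (.prim2 .mul v₁ v₂)
          (.lete [] [(a, .real)] (.scale v₁ d₂)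
            (.lete [] [(b, .real)] (.scale v₂ d₁)
              (.lete [] [(t, .real)] (.linAdd a b) (.ret [p] [t])))))
  | drop {e e' : Expr} (m : List (Var × Var)) :
      Jvp m e e' → Jvp m (.drop e) (.drop e')
  | dupVar {e e' : Expr} (m : List (Var × Var)) (x dx u w : Var) (τ : Ty) :
      Jvp ((x, u) :: (x, w) :: m) e e' →
      Jvp ((x, dx) :: m) e (.lete [] [(u, τ), (w, τ)] (.dup dx) e')
  | perm {e e' : Expr} (m m' : List (Var × Var)) :
      m.Perm m' → Jvp m e e' → Jvp m' e e'

/-- Forward-mode differentiation of a (purely non-linear) function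
definition: the differentiated function takes tangents for all its
parameters and returns primal results paired with their tangents. -/
def JDef (d d' : FDef) : Prop :=
  d.linParams = [] ∧ d.linRetTys = [] ∧
  ∃ dxs : List (Var × Ty),
    dxs.map Prod.snd = d.params.map Prod.snd ∧ (dxs.map Prod.fst).Nodup ∧
    Jvp ((d.params.map Prod.fst).zip (dxs.map Prod.fst)) d.body d'.body ∧
    d'.params = d.params ∧ d'.linParams = dxs ∧
    d'.retTys = d.retTys ∧ d'.linRetTys = d.retTys

/-- Forward-mode differentiation of a program, definition by definition. -/
def JProg (P P' : Program) : Prop := List.Forall₂ JDef P P'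

/-- The vector of `Fin n → ℝ` determined by a list of reals. -/
def vecOf (l : List ℝ) (n : ℕ) : Fin n → ℝ := fun i => l.getD i 0

/-! ### Additivity in the linear inputs

Compare three runs of `e`, under `dρ₁`, `dρ₂` and their sum, by induction on the first. The
non-linear results never depend on the linear environment, so the three runs unpack the same pairs
and scale by the same scalars; every linear construct (variables, zero, tuples, addition, scaling,
`dup`) maps summed inputs to summed outputs; and the typing derivation supplies the arities that keep
the linear variables bound by `let` and by function calls aligned with their values.
-/

/- Stronger than `c = addVal a b`: it also records that `a` and `b` have the same shape, outside
of which `addVal` returns junk. -/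
inductive IsSum : Val → Val → Val → Prop
  | real (a b : ℝ) : IsSum (.real a) (.real b) (.real (a + b))
  | pair {a₁ a₂ b₁ b₂ c₁ c₂ : Val} :
      IsSum a₁ b₁ c₁ → IsSum a₂ b₂ c₂ → IsSum (.pair a₁ a₂) (.pair b₁ b₂) (.pair c₁ c₂)

namespace IsSum

theorem eq_addVal {a b c : Val} (h : IsSum a b c) : c = addVal a b := by
  induction h with
  | real => rfl
  | pair _ _ ih₁ ih₂ => rw [ih₁, ih₂]; rfl

theorem of_valHasTy {a b : Val} {τ : Ty} (ha : ValHasTy a τ) (hb : ValHasTy b τ) :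
    IsSum a b (addVal a b) := by
  induction ha generalizing b with
  | real => cases hb; exact .real _ _
  | pair _ _ ih₁ ih₂ => cases hb with | pair hb₁ hb₂ => exact .pair (ih₁ hb₁) (ih₂ hb₂)

theorem zero (τ : Ty) : IsSum (zeroVal τ) (zeroVal τ) (zeroVal τ) := by
  induction τ with
  | real => simpa [zeroVal] using IsSum.real 0 0
  | pair _ _ ih₁ ih₂ => exact .pair ih₁ ih₂

theorem smul (k : ℝ) {a b c : Val} (h : IsSum a b c) :
    IsSum (smulVal k a) (smulVal k b) (smulVal k c) := by
  induction h with
  | real a b => simpa [smulVal, mul_add] using IsSum.real (k * a) (k * b)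
  | pair _ _ ih₁ ih₂ => exact .pair ih₁ ih₂

theorem add {a₁ b₁ c₁ a₂ b₂ c₂ : Val} (h₁ : IsSum a₁ b₁ c₁) (h₂ : IsSum a₂ b₂ c₂) :
    IsSum (addVal a₁ a₂) (addVal b₁ b₂) (addVal c₁ c₂) := by
  induction h₁ generalizing a₂ b₂ c₂ with
  | real a b =>
      cases h₂ with
      | real a' b' => simpa [addVal, add_add_add_comm] using IsSum.real (a + a') (b + b')
      | pair => exact .real a b
  | pair h₁₁ h₁₂ ih₁ ih₂ =>
      cases h₂ with
      | real => exact .pair h₁₁ h₁₂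
      | pair h₂₁ h₂₂ => exact .pair (ih₁ h₂₁) (ih₂ h₂₂)

theorem of_pair {a₁ a₂ b₁ b₂ c₁ c₂ : Val}
    (h : IsSum (.pair a₁ a₂) (.pair b₁ b₂) (.pair c₁ c₂)) : IsSum a₁ b₁ c₁ ∧ IsSum a₂ b₂ c₂ := by
  cases h with | pair h₁ h₂ => exact ⟨h₁, h₂⟩

end IsSum

inductive IsSumList : List Val → List Val → List Val → Prop
  | nil : IsSumList [] [] []
  | cons {a b c : Val} {as bs cs : List Val} :
      IsSum a b c → IsSumList as bs cs → IsSumList (a :: as) (b :: bs) (c :: cs)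

namespace IsSumList

theorem eq_zipWith {as bs cs : List Val} (h : IsSumList as bs cs) :
    cs = List.zipWith addVal as bs := by
  induction h with
  | nil => rfl
  | cons hc _ ih => rw [hc.eq_addVal, ih, List.zipWith_cons_cons]

theorem map {ι : Type*} (l : List ι) {f₁ f₂ f₃ : ι → Val}
    (h : ∀ i ∈ l, IsSum (f₁ i) (f₂ i) (f₃ i)) : IsSumList (l.map f₁) (l.map f₂) (l.map f₃) := by
  induction l with
  | nil => exact .nil
  | cons i l ih =>
      exact .cons (h i List.mem_cons_self) (ih fun j hj => h j (List.mem_cons_of_mem _ hj))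

theorem updEnv_apply {vs₁ vs₂ vs₃ : List Val} (h : IsSumList vs₁ vs₂ vs₃) {xs : List Var}
    (hlen : xs.length = vs₁.length) {f₁ f₂ f₃ : VEnv} {x : Var}
    (hx : x ∉ xs → IsSum (f₁ x) (f₂ x) (f₃ x)) :
    IsSum (updEnv f₁ xs vs₁ x) (updEnv f₂ xs vs₂ x) (updEnv f₃ xs vs₃ x) := by
  induction h generalizing xs f₁ f₂ f₃ with
  | nil =>
      obtain rfl : xs = [] := List.length_eq_zero_iff.mp hlen
      exact hx List.not_mem_nil
  | cons habc _ ih =>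
      obtain ⟨y, ys, rfl⟩ := List.exists_cons_of_length_eq_add_one hlen
      refine ih (Nat.succ.inj hlen) fun hys => ?_
      by_cases hxy : x = y
      · subst hxy
        simpa only [Function.update_self] using habc
      · simpa only [Function.update_of_ne hxy] using hx (by simp [hxy, hys])

end IsSumList

def EnvSum (Δ : TEnv) (dρ₁ dρ₂ dρ₃ : VEnv) : Prop :=
  ∀ p ∈ Δ, IsSum (dρ₁ p.1) (dρ₂ p.1) (dρ₃ p.1)

namespace EnvSum

variable {Δ Δ' : TEnv} {dρ₁ dρ₂ dρ₃ : VEnv}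

theorem mono (h : EnvSum Δ dρ₁ dρ₂ dρ₃) (hΔ : Δ' ⊆ Δ) : EnvSum Δ' dρ₁ dρ₂ dρ₃ :=
  fun p hp => h p (hΔ hp)

theorem bind (h : EnvSum Δ dρ₁ dρ₂ dρ₃) {bs : List (Var × Ty)} {vs₁ vs₂ vs₃ : List Val}
    (hvs : IsSumList vs₁ vs₂ vs₃) (hlen : bs.length = vs₁.length) :
    EnvSum (Δ ∪ bs.toFinset) (updEnv dρ₁ (bs.map Prod.fst) vs₁) (updEnv dρ₂ (bs.map Prod.fst) vs₂)
      (updEnv dρ₃ (bs.map Prod.fst) vs₃) := by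
  refine fun p hp => hvs.updEnv_apply (by simpa using hlen) fun hp₁ => h p ?_
  rcases Finset.mem_union.mp hp with hp | hp
  · exact hp
  · exact absurd (List.mem_map_of_mem (List.mem_toFinset.mp hp)) hp₁

theorem isSumList_map_zip {xs : List Var} {τs : List Ty}
    (h : EnvSum (xs.zip τs).toFinset dρ₁ dρ₂ dρ₃) (hlen : xs.length ≤ τs.length) :
    IsSumList (xs.map dρ₁) (xs.map dρ₂) (xs.map dρ₃) := by
  have hzip := IsSumList.map (xs.zip τs) (f₁ := dρ₁ ∘ Prod.fst) (f₂ := dρ₂ ∘ Prod.fst)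
    (f₃ := dρ₃ ∘ Prod.fst) fun p hp => h p (List.mem_toFinset.mpr hp)
  simpa only [← List.map_map, List.map_fst_zip hlen] using hzip

end EnvSum

theorem HasTy.mono {P P' : Program} {Γ Δ : TEnv} {e : Expr} {τs σs : List Ty}
    (h : HasTy P Γ Δ e τs σs) (hP : P <+: P') : HasTy P' Γ Δ e τs σs := by
  induction h with
  | app f d vs dvs hf hl₁ hl₂ hnd =>
      obtain ⟨t, rfl⟩ := hP
      obtain ⟨hlt, -⟩ := List.getElem?_eq_some_iff.mp hf
      exact .app f d vs dvs (by rwa [List.getElem?_append_left hlt]) hl₁ hl₂ hnd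
  | _ => constructor <;> assumption

theorem ProgramWT.hasTy_body {P : Program} (hP : ProgramWT P) {f : ℕ} {d : FDef}
    (hf : P[f]? = some d) :
    HasTy P d.params.toFinset d.linParams.toFinset d.body d.retTys d.linRetTys :=
  (hP f d hf).mono (List.take_prefix _ _)

section Eval

variable {P : Program} {ρ dρ : VEnv} {e : Expr} {os ls : List Val} {w : ℕ}

theorem Eval.length_linear_eq (hP : ProgramWT P) (hev : Eval P ρ dρ e os ls w)
    {Γ Δ : TEnv} {τs σs : List Ty} (ht : HasTy P Γ Δ e τs σs) : ls.length = σs.length := by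
  induction hev generalizing Γ Δ τs σs with
  | lete _ _ _ ih₂ => cases ht with | lete _ ht₂ => exact ih₂ ht₂
  | unpack _ _ ih => cases ht with | unpack _ _ _ ht' => exact ih ht'
  | linUnpack _ _ ih => cases ht with | linUnpack _ _ _ ht' => exact ih ht'
  | app hf _ ih =>
      cases ht with
      | app _ _ _ _ hf' =>
          cases hf.symm.trans hf'
          exact ih (hP.hasTy_body hf)
  | _ => cases ht; simp

theorem Eval.nonlinear_eq {dρ' : VEnv} {os' ls' : List Val} {w' : ℕ}
    (hev : Eval P ρ dρ e os ls w) (hev' : Eval P ρ dρ' e os' ls' w') : os' = os := by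
  induction hev generalizing dρ' os' ls' w' with
  | lete _ _ ih₁ ih₂ =>
      cases hev' with
      | lete h₁ h₂ =>
          obtain rfl := ih₁ h₁
          exact ih₂ h₂
  | unpack hv _ ih =>
      cases hev' with
      | unpack hv' h =>
          cases hv.symm.trans hv'
          exact ih h
  | linUnpack _ _ ih => cases hev' with | linUnpack _ h => exact ih h
  | app hf _ ih =>
      cases hev' with
      | app hf' h =>
          cases hf.symm.trans hf'
          exact ih h
  | prim1 hv => cases hev' with | prim1 hv' => cases hv.symm.trans hv'; rfl
  | prim2 hv₁ hv₂ =>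
      cases hev' with
      | prim2 hv₁' hv₂' => cases hv₁.symm.trans hv₁'; cases hv₂.symm.trans hv₂'; rfl
  | _ => cases hev'; rfl

theorem Eval.isSumList_linear (hP : ProgramWT P) {dρ₁ dρ₂ dρ₃ : VEnv}
    {os₁ os₂ os₃ ls₁ ls₂ ls₃ : List Val} {w₁ w₂ w₃ : ℕ} (h₁ : Eval P ρ dρ₁ e os₁ ls₁ w₁)
    (h₂ : Eval P ρ dρ₂ e os₂ ls₂ w₂) (h₃ : Eval P ρ dρ₃ e os₃ ls₃ w₃)
    {Γ Δ : TEnv} {τs σs : List Ty} (ht : HasTy P Γ Δ e τs σs) (hΔ : EnvSum Δ dρ₁ dρ₂ dρ₃) :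
    IsSumList ls₁ ls₂ ls₃ := by
  induction h₁ generalizing Γ Δ τs σs dρ₂ dρ₃ os₂ ls₂ os₃ ls₃ w₂ w₃ with
  | ret =>
      cases h₂; cases h₃
      cases ht with
      | ret vs dvs =>
          simp only [List.map_map]
          exact .map dvs fun p hp => hΔ p (List.mem_toFinset.mpr hp)
  | lete h₁a _ ih₁ ih₂ =>
      cases ht with | lete ht₁ ht₂ _ _ _ =>
      cases h₂ with | lete h₂a h₂b =>
      cases h₃ with | lete h₃a h₃b =>
      obtain rfl := h₁a.nonlinear_eq h₂a
      obtain rfl := h₁a.nonlinear_eq h₃a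
      have hdus := ih₁ h₂a h₃a ht₁ (hΔ.mono Finset.subset_union_left)
      refine ih₂ h₂b h₃b ht₂ ((hΔ.mono Finset.subset_union_right).bind hdus ?_)
      simpa using (h₁a.length_linear_eq hP ht₁).symm
  | unpack hv _ ih =>
      cases ht with | unpack _ _ _ ht' =>
      cases h₂ with | unpack hv₂ h₂ =>
      cases h₃ with | unpack hv₃ h₃ =>
      cases hv.symm.trans hv₂
      cases hv.symm.trans hv₃
      exact ih h₂ h₃ ht' hΔ
  | @linUnpack _ _ b₁ b₂ _ _ _ _ _ _ _ hv _ ih =>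
      cases ht with | linUnpack _ _ _ ht' =>
      cases h₂ with | linUnpack hv₂ h₂ =>
      cases h₃ with | linUnpack hv₃ h₃ =>
      have hpair := hΔ _ (Finset.mem_union_right _ (Finset.mem_singleton_self _))
      rw [hv, hv₂, hv₃] at hpair
      obtain ⟨ha, hb⟩ := hpair.of_pair
      have hbody := (hΔ.mono Finset.subset_union_left).bind (bs := [b₁, b₂])
        (.cons ha (.cons hb .nil)) rfl
      exact ih h₂ h₃ ht' (by simpa using hbody)
  | @app _ dρ _ d _ dvs _ _ _ hf _ ih =>
      cases ht with | app _ _ _ _ hf' _ hlen _ =>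
      cases hf.symm.trans hf'
      cases h₂ with | app hf₂ h₂ =>
      cases h₃ with | app hf₃ h₃ =>
      cases hf.symm.trans hf₂
      cases hf.symm.trans hf₃
      have hargs := hΔ.isSumList_map_zip (by simp [hlen])
      exact ih h₂ h₃ (hP.hasTy_body hf) fun _ _ =>
        hargs.updEnv_apply (by simp [hlen]) fun _ => .zero .real
  | linVar =>
      cases h₂; cases h₃; cases ht
      exact .cons (hΔ _ (Finset.mem_singleton_self _)) .nil
  | dup =>
      cases h₂; cases h₃; cases ht
      have h := hΔ _ (Finset.mem_singleton_self _)
      exact .cons h (.cons h .nil)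
  | linZero => cases h₂; cases h₃; exact .cons (.zero _) .nil
  | linTup =>
      cases h₂; cases h₃; cases ht
      exact .cons (.pair (hΔ _ (Finset.mem_insert_self _ _))
        (hΔ _ (Finset.mem_insert_of_mem (Finset.mem_singleton_self _)))) .nil
  | linAdd =>
      cases h₂; cases h₃; cases ht
      exact .cons ((hΔ _ (Finset.mem_insert_self _ _)).add
        (hΔ _ (Finset.mem_insert_of_mem (Finset.mem_singleton_self _)))) .nil
  | scale _ hv =>
      cases h₂ with | scale _ hv₂ =>
      cases h₃ with | scale _ hv₃ =>
      cases hv.symm.trans hv₂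
      cases hv.symm.trans hv₃
      cases ht
      exact .cons ((hΔ _ (Finset.mem_singleton_self _)).smul _) .nil
  | _ => cases h₂; cases h₃; exact .nil

end Eval

theorem linear_results_additive_general
    {P : Program} {Γ Δ : TEnv} {e : Expr} {τs σs : List Ty}
    (hP : ProgramWT P) (ht : HasTy P Γ Δ e τs σs)
    {ρ dρ₁ dρ₂ dρ₃ : VEnv} {os₁ os₂ os₃ ls₁ ls₂ ls₃ : List Val} {w₁ w₂ w₃ : ℕ}
    (hd₁ : EnvTyped dρ₁ Δ) (hd₂ : EnvTyped dρ₂ Δ)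
    (hsum : ∀ p ∈ Δ, dρ₃ p.1 = addVal (dρ₁ p.1) (dρ₂ p.1))
    (e₁ : Eval P ρ dρ₁ e os₁ ls₁ w₁) (e₂ : Eval P ρ dρ₂ e os₂ ls₂ w₂)
    (e₃ : Eval P ρ dρ₃ e os₃ ls₃ w₃) :
    ∀ l : ℕ, ls₃[l]? = (List.zipWith addVal ls₁ ls₂)[l]? := by
  have hΔ : EnvSum Δ dρ₁ dρ₂ dρ₃ := fun p hp =>
    hsum p hp ▸ IsSum.of_valHasTy (hd₁ p hp) (hd₂ p hp)
  rw [(e₁.isSumList_linear hP e₂ e₃ ht hΔ).eq_zipWith]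
  exact fun _ => rfl

/-- **Additivity in the linear inputs** (Theorem 2.2, Claim 3).  For a
well-typed Linear A expression `e`, a well-typed valuation `ρ` of its free
non-linear variables, and well-typed valuations `dρ₁`, `dρ₂` of its free
linear variables, evaluating `e` at the pointwise sum of the linear inputs
gives, at every linear result position, the pointwise sum of the linear
results of the two separate evaluations. -/
theorem linear_results_additive
    {P : Program} {Γ Δ : TEnv} {e : Expr} {τs σs : List Ty}
    (hP : ProgramWT P) (ht : HasTy P Γ Δ e τs σs)
    {ρ dρ₁ dρ₂ dρ₃ : VEnv} {os₁ os₂ os₃ ls₁ ls₂ ls₃ : List Val} {w₁ w₂ w₃ : ℕ}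
    (hρ : EnvTyped ρ Γ) (hd₁ : EnvTyped dρ₁ Δ) (hd₂ : EnvTyped dρ₂ Δ)
    (hsum : ∀ p ∈ Δ, dρ₃ p.1 = addVal (dρ₁ p.1) (dρ₂ p.1))
    (e₁ : Eval P ρ dρ₁ e os₁ ls₁ w₁) (e₂ : Eval P ρ dρ₂ e os₂ ls₂ w₂)
    (e₃ : Eval P ρ dρ₃ e os₃ ls₃ w₃) :
    ∀ l : ℕ, ls₃[l]? = (List.zipWith addVal ls₁ ls₂)[l]? :=
  linear_results_additive_general hP ht hd₁ hd₂ hsum e₁ e₂ e₃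

end LinearA
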